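/- Let z : ℝ → ℝ be continuous, let M, N ≥ 0, let r > 0, and suppose that |z(s)| ≤ ∫₀ˢ ( ∫₀ᵗ M·|z(x)| dx + N·|z(t)| ) dt for all s ∈ [0, r]. Then there exists ε > 0 such that z(s) = 0 for all s ∈ [0, ε]. -/
import Mathlib


theorem stmt_7 (z : ℝ → ℝ) (hz : Continuous z) (M N : ℝ) (hM : 0 ≤ M) (hN : 0 ≤ N)
    (r : ℝ) (hr : 0 < r)
    (hineq : ∀ s ∈ Set.Icc 0 r,
      |z s| ≤ ∫ t in (0:ℝ)..s, ((∫ x in (0:ℝ)..t, M * |z x|) + N * |z t|)) :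
    ∃ ε > (0 : ℝ), ∀ s ∈ Set.Icc 0 ε, z s = 0 := by
  have hMN : (0:ℝ) < M + N + 1 := by linarith
  set ε := min r (1/(2*(M+N+1))) with hεdef
  have hε : 0 < ε := lt_min hr (by positivity)
  have hεr : ε ≤ r := min_le_left _ _
  have hεb : ε ≤ 1/(2*(M+N+1)) := min_le_right _ _
  have hε1 : ε ≤ 1 := by
    refine hεb.trans ?_
    rw [div_le_one (by positivity)]
    linarith
  refine ⟨ε, hε, ?_⟩
  have hcontabs : Continuous fun x => |z x| := continuous_abs.comp hz
  obtain ⟨s₀, hs₀, hmax⟩ := isCompact_Icc.exists_isMaxOn (Set.nonempty_Icc.2 hε.le)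
    hcontabs.continuousOn
  set C := |z s₀| with hCdef
  have hC0 : 0 ≤ C := abs_nonneg _
  have key : ∀ s ∈ Set.Icc (0:ℝ) ε, |z s| ≤ (M*ε^2/2 + N*ε) * C := by
    intro s hs
    obtain ⟨hs0, hsε⟩ := hs
    have h1 := hineq s ⟨hs0, hsε.trans hεr⟩
    have hcMz : Continuous fun x => M * |z x| := continuous_const.mul hcontabs
    have hint1 : IntervalIntegrable
        (fun t => (∫ x in (0:ℝ)..t, M * |z x|) + N * |z t|) MeasureTheory.volume 0 s := by
      apply Continuous.intervalIntegrable
      exact (intervalIntegral.continuous_primitive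
        (fun a b => hcMz.intervalIntegrable a b) 0).add (continuous_const.mul hcontabs)
    have hint2 : IntervalIntegrable (fun t => M*C*t + N*C) MeasureTheory.volume 0 s :=
      ((continuous_const.mul continuous_id).add continuous_const).intervalIntegrable _ _
    have h2 : (∫ t in (0:ℝ)..s, ((∫ x in (0:ℝ)..t, M * |z x|) + N * |z t|))
        ≤ ∫ t in (0:ℝ)..s, (M*C*t + N*C) := by
      apply intervalIntegral.integral_mono_on hs0 hint1 hint2
      intro t ht
      obtain ⟨ht0, hts⟩ := ht
      have htε : t ∈ Set.Icc (0:ℝ) ε := ⟨ht0, hts.trans hsε⟩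
      have hinner : (∫ x in (0:ℝ)..t, M * |z x|) ≤ M * C * t := by
        calc (∫ x in (0:ℝ)..t, M * |z x|) ≤ ∫ _x in (0:ℝ)..t, M*C := by
              apply intervalIntegral.integral_mono_on ht0
                (hcMz.intervalIntegrable 0 t) (intervalIntegrable_const)
              intro x hx
              exact mul_le_mul_of_nonneg_left (hmax ⟨hx.1, hx.2.trans htε.2⟩) hM
          _ = M*C*t := by simp; ring
      have hzt : N * |z t| ≤ N * C := mul_le_mul_of_nonneg_left (hmax htε) hN
      linarith
    have ha : (∫ t in (0:ℝ)..s, M*C*t) = M*C*(s^2/2) := by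
      rw [intervalIntegral.integral_const_mul, integral_id]; ring
    have hb : (∫ _t in (0:ℝ)..s, N*C) = N*C*s := by simp; ring
    have h3 : (∫ t in (0:ℝ)..s, (M*C*t + N*C)) = M*C*(s^2/2) + N*C*s := by
      have hic : IntervalIntegrable (fun t : ℝ => M*C*t) MeasureTheory.volume 0 s :=
        (continuous_const.mul continuous_id).intervalIntegrable _ _
      rw [intervalIntegral.integral_add hic intervalIntegrable_const, ha, hb]
    have hs2 : s^2 ≤ ε^2 := by nlinarith
    have hfinal : M*C*(s^2/2) + N*C*s ≤ (M*ε^2/2 + N*ε) * C := by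
      nlinarith [mul_le_mul_of_nonneg_left hs2 (mul_nonneg hM hC0),
        mul_le_mul_of_nonneg_left hsε (mul_nonneg hN hC0)]
    linarith
  have hhalf : M*ε^2/2 + N*ε ≤ 1/2 := by
    have h2 : ε * (2*(M+N+1)) ≤ 1 := by
      rw [← le_div_iff₀ (by positivity : (0:ℝ) < 2*(M+N+1))]
      exact hεb
    nlinarith [mul_le_mul_of_nonneg_left hε1 (mul_nonneg hM hε.le),
      mul_nonneg hN hε.le, hε.le]
  have hCle : C ≤ (M*ε^2/2 + N*ε) * C := key s₀ hs₀
  have hC : C = 0 := by nlinarith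
  intro s hs
  have := key s hs
  have : |z s| ≤ 0 := by rw [hC] at this; linarith
  exact abs_nonpos_iff.mp this
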